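/- Let c > 0, let F : ℝ → ℝ be infinitely differentiable, and let i₁, …, i_l ∈ {1,2,3} be any finite list of spatial indices. Then the function u(t,x) = ∂_{i₁} ⋯ ∂_{i_l} ( F(t - |x|/c)/|x| ), obtained by applying the iterated spatial partial derivatives to the retarded spherical wave, satisfies the homogeneous wave equation Δu - (1/c²) ∂²u/∂t² = 0 at every point (t,x) ∈ ℝ × (ℝ³ \ {0}). -/

import Mathlib

noncomputable section

/-- Partial derivative of `u : ℝ → ℝ³ → ℝ` with respect to the `i`-th spatial coordinate. -/
def spatialDeriv (i : Fin 3) (u : ℝ → EuclideanSpace ℝ (Fin 3) → ℝ) :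
    ℝ → EuclideanSpace ℝ (Fin 3) → ℝ :=
  fun t x => deriv (fun s : ℝ => u t (x + s • EuclideanSpace.single i (1 : ℝ))) 0

/-- Iterated spatial partial derivative `∂_L = ∂_{i₁} ⋯ ∂_{i_l}` associated with a
finite list of spatial indices `L = i₁⋯i_l` (the multi-index operator of the paper). -/
def multiDeriv : List (Fin 3) → (ℝ → EuclideanSpace ℝ (Fin 3) → ℝ) →
    ℝ → EuclideanSpace ℝ (Fin 3) → ℝ
  | [], u => u
  | i :: L, u => spatialDeriv i (multiDeriv L u)

/-- The flat-space Laplacian acting in the spatial variables. -/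
def spatialLaplacian (u : ℝ → EuclideanSpace ℝ (Fin 3) → ℝ) :
    ℝ → EuclideanSpace ℝ (Fin 3) → ℝ :=
  fun t x => ∑ i : Fin 3, spatialDeriv i (spatialDeriv i u) t x

/-- The second time derivative `∂²u/∂t²`. -/
def timeDeriv2 (u : ℝ → EuclideanSpace ℝ (Fin 3) → ℝ) :
    ℝ → EuclideanSpace ℝ (Fin 3) → ℝ :=
  fun t x => deriv (deriv fun s : ℝ => u s x) t

/-! ### Auxiliary development -/

open scoped RealInnerProductSpace

namespace MultipolarWaveAux

abbrev E3 := EuclideanSpace ℝ (Fin 3)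

/-- The exterior region (complement of the spatial origin), as a subset of spacetime. -/
def Omg : Set (ℝ × E3) := {p | p.2 ≠ 0}

lemma isOpen_Omg : IsOpen Omg := isOpen_compl_singleton.preimage continuous_snd

/-- Directional derivative along `v`. -/
def Dv (v : ℝ × E3) (H : ℝ × E3 → ℝ) : ℝ × E3 → ℝ := fun p => fderiv ℝ H p v

/-- The `i`-th coordinate vector. -/
def eV (i : Fin 3) : E3 := EuclideanSpace.single i (1:ℝ)

/-- Smoothness (of every finite order) on the exterior region. -/
def WSmooth (H : ℝ × E3 → ℝ) : Prop := ∀ m : ℕ, ContDiffOn ℝ m H Omg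

lemma WSmooth.contDiffAt {H : ℝ × E3 → ℝ} (h : WSmooth H) {p : ℝ × E3} (hp : p ∈ Omg) (m : ℕ) :
    ContDiffAt ℝ m H p :=
  (h m).contDiffAt (isOpen_Omg.mem_nhds hp)

lemma WSmooth.differentiableAt {H : ℝ × E3 → ℝ} (h : WSmooth H) {p : ℝ × E3} (hp : p ∈ Omg) :
    DifferentiableAt ℝ H p :=
  (h.contDiffAt hp 1).differentiableAt (by norm_cast)

lemma smooth_Dv {H : ℝ × E3 → ℝ} (h : WSmooth H) (v : ℝ × E3) : WSmooth (Dv v H) := by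
  intro m p hp
  have h1 : ContDiffAt ℝ (m + 1 : ℕ) H p := h.contDiffAt hp (m + 1)
  have h2 : ContDiffAt ℝ m (fderiv ℝ H) p := h1.fderiv_right (by norm_cast)
  exact (h2.clm_apply contDiffAt_const).contDiffWithinAt

lemma Dv_Dv {H : ℝ × E3 → ℝ} (h : WSmooth H) {p : ℝ × E3} (hp : p ∈ Omg) (v w : ℝ × E3) :
    Dv w (Dv v H) p = fderiv ℝ (fderiv ℝ H) p w v := by
  have hfd : DifferentiableAt ℝ (fderiv ℝ H) p :=
    ((h.contDiffAt hp 2).fderiv_right (m := 1) (by norm_cast)).differentiableAt (by norm_cast)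
  have hc : HasFDerivAt (fun q => fderiv ℝ H q v)
      ((ContinuousLinearMap.apply ℝ ℝ v).comp (fderiv ℝ (fderiv ℝ H) p)) p :=
    (ContinuousLinearMap.apply ℝ ℝ v).hasFDerivAt.comp p hfd.hasFDerivAt
  show fderiv ℝ (fun q => fderiv ℝ H q v) p w = _
  rw [hc.fderiv]
  simp

lemma Dv_comm {H : ℝ × E3 → ℝ} (h : WSmooth H) {p : ℝ × E3} (hp : p ∈ Omg) (v w : ℝ × E3) :
    Dv w (Dv v H) p = Dv v (Dv w H) p := by
  rw [Dv_Dv h hp v w, Dv_Dv h hp w v]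
  exact (h.contDiffAt hp 2).isSymmSndFDerivAt (by simp) w v

/-- The wave operator `Δ - (1/c²) ∂ₜ²`. -/
def box (c : ℝ) (H : ℝ × E3 → ℝ) : ℝ × E3 → ℝ := fun p =>
  (∑ i : Fin 3, Dv ((0:ℝ), eV i) (Dv ((0:ℝ), eV i) H) p)
    - (1 / c ^ 2) * Dv ((1:ℝ), (0:E3)) (Dv ((1:ℝ), (0:E3)) H) p

/-- The wave operator commutes with directional derivatives on the exterior region. -/
lemma box_Dv {c : ℝ} {H : ℝ × E3 → ℝ} (hH : WSmooth H) (hbox : ∀ p ∈ Omg, box c H p = 0)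
    (v : ℝ × E3) : ∀ p ∈ Omg, box c (Dv v H) p = 0 := by
  intro p hp
  have hmem := isOpen_Omg.mem_nhds hp
  have key : ∀ w : ℝ × E3, Dv w (Dv w (Dv v H)) p = Dv v (Dv w (Dv w H)) p := by
    intro w
    have heq : Dv w (Dv v H) =ᶠ[nhds p] Dv v (Dv w H) :=
      Filter.eventuallyEq_of_mem hmem (fun q hq => Dv_comm hH hq v w)
    calc Dv w (Dv w (Dv v H)) p = fderiv ℝ (Dv v (Dv w H)) p w := by
            show fderiv ℝ (Dv w (Dv v H)) p w = _
            rw [heq.fderiv_eq]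
      _ = Dv w (Dv v (Dv w H)) p := rfl
      _ = Dv v (Dv w (Dv w H)) p := (Dv_comm (smooth_Dv hH w) hp w v).symm
  have hz : fderiv ℝ (box c H) p = 0 := by
    have hzero : box c H =ᶠ[nhds p] fun _ => (0:ℝ) :=
      Filter.eventuallyEq_of_mem hmem hbox
    rw [hzero.fderiv_eq]
    exact fderiv_const_apply 0
  have hdiffsum : ∀ i : Fin 3, DifferentiableAt ℝ (Dv ((0:ℝ), eV i) (Dv ((0:ℝ), eV i) H)) p :=
    fun i => (smooth_Dv (smooth_Dv hH _) _).differentiableAt hp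
  have hdifft : DifferentiableAt ℝ (Dv ((1:ℝ), (0:E3)) (Dv ((1:ℝ), (0:E3)) H)) p :=
    (smooth_Dv (smooth_Dv hH _) _).differentiableAt hp
  have hexp : fderiv ℝ (box c H) p v
      = (∑ i : Fin 3, Dv v (Dv ((0:ℝ), eV i) (Dv ((0:ℝ), eV i) H)) p)
        - (1 / c ^ 2) * Dv v (Dv ((1:ℝ), (0:E3)) (Dv ((1:ℝ), (0:E3)) H)) p := by
    have h1 : fderiv ℝ (box c H) p
        = fderiv ℝ (fun q => ∑ i : Fin 3, Dv ((0:ℝ), eV i) (Dv ((0:ℝ), eV i) H) q) p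
          - fderiv ℝ (fun q => (1 / c ^ 2) * Dv ((1:ℝ), (0:E3)) (Dv ((1:ℝ), (0:E3)) H) q) p := by
      apply fderiv_sub
      · exact DifferentiableAt.fun_sum (fun i _ => hdiffsum i)
      · exact hdifft.const_mul _
    rw [h1, fderiv_fun_sum (fun i _ => hdiffsum i), fderiv_const_mul hdifft]
    simp [Dv]
  have hbv : box c (Dv v H) p = fderiv ℝ (box c H) p v := by
    rw [hexp, box]
    congr 1
    · exact Finset.sum_congr rfl (fun i _ => key _)
    · rw [key]
  rw [hbv, hz]
  simp

/-! ### Transfer from curried derivatives to directional derivatives -/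

lemma spatialDeriv_eq {uu : ℝ → E3 → ℝ} {H : ℝ × E3 → ℝ} (hH : WSmooth H)
    (hcur : ∀ t x, x ≠ 0 → uu t x = H (t, x)) (i : Fin 3) :
    ∀ t (x : E3), x ≠ 0 → spatialDeriv i uu t x = Dv ((0:ℝ), eV i) H (t, x) := by
  intro t x hx
  have hcont : Continuous (fun s : ℝ => x + s • eV i) :=
    continuous_const.add (continuous_id.smul continuous_const)
  have hmemnhds : {s : ℝ | x + s • eV i ≠ 0} ∈ nhds (0:ℝ) := by
    have : IsOpen {s : ℝ | x + s • eV i ≠ 0} := isOpen_compl_singleton.preimage hcont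
    exact this.mem_nhds (by simpa using hx)
  have hev : (fun s : ℝ => uu t (x + s • eV i)) =ᶠ[nhds (0:ℝ)]
      fun s : ℝ => H (t, x + s • eV i) := by
    filter_upwards [hmemnhds] with s hs using hcur t _ hs
  have hm : HasDerivAt (fun s : ℝ => ((t, x + s • eV i) : ℝ × E3)) ((0:ℝ), eV i) 0 := by
    have h2 : HasDerivAt (fun s : ℝ => x + s • eV i) (eV i) 0 := by
      simpa using ((hasDerivAt_id (0:ℝ)).smul_const (eV i)).const_add x
    simpa using (hasDerivAt_const (0:ℝ) t).prodMk h2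
  have hD : HasDerivAt (fun s : ℝ => H (t, x + s • eV i)) (fderiv ℝ H (t, x) ((0:ℝ), eV i)) 0 := by
    have hd := (hH.differentiableAt (show ((t, x) : ℝ × E3) ∈ Omg from hx)).hasFDerivAt
    exact hd.comp_hasDerivAt_of_eq 0 hm (by simp)
  show deriv (fun s : ℝ => uu t (x + s • EuclideanSpace.single i (1:ℝ))) 0 = _
  rw [show (EuclideanSpace.single i (1:ℝ)) = eV i from rfl, hev.deriv_eq, hD.deriv]
  rfl

lemma deriv_time {H : ℝ × E3 → ℝ} (hH : WSmooth H) {x : E3} (hx : x ≠ 0) (s : ℝ) :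
    deriv (fun s' : ℝ => H (s', x)) s = Dv ((1:ℝ), (0:E3)) H (s, x) := by
  have hm : HasDerivAt (fun s' : ℝ => ((s', x) : ℝ × E3)) ((1:ℝ), (0:E3)) s := by
    simpa using (hasDerivAt_id s).prodMk (hasDerivAt_const s x)
  have hd := (hH.differentiableAt (show ((s, x) : ℝ × E3) ∈ Omg from hx)).hasFDerivAt
  have hD : HasDerivAt (fun s' : ℝ => H (s', x)) (fderiv ℝ H (s, x) ((1:ℝ), (0:E3))) s := by
    exact hd.comp_hasDerivAt_of_eq s hm rfl
  rw [hD.deriv]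
  rfl

lemma timeDeriv2_eq {uu : ℝ → E3 → ℝ} {H : ℝ × E3 → ℝ} (hH : WSmooth H)
    (hcur : ∀ t x, x ≠ 0 → uu t x = H (t, x)) :
    ∀ t (x : E3), x ≠ 0 →
      timeDeriv2 uu t x = Dv ((1:ℝ), (0:E3)) (Dv ((1:ℝ), (0:E3)) H) (t, x) := by
  intro t x hx
  have h1 : (fun s : ℝ => uu s x) = fun s : ℝ => H (s, x) :=
    funext fun s => hcur s x hx
  have h2 : deriv (fun s : ℝ => H (s, x)) = fun s : ℝ => Dv ((1:ℝ), (0:E3)) H (s, x) :=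
    funext fun s => deriv_time hH hx s
  show deriv (deriv fun s : ℝ => uu s x) t = _
  rw [h1, h2]
  exact deriv_time (smooth_Dv hH _) hx t

/-! ### The base retarded spherical wave -/

lemma hasFDerivAt_norm' {x : E3} (hx : x ≠ 0) :
    HasFDerivAt (fun y : E3 => ‖y‖) (‖x‖⁻¹ • innerSL ℝ x) x := by
  have h1 : HasFDerivAt (fun y : E3 => ⟪y, y⟫) ((2:ℝ) • innerSL ℝ x) x := by
    have := (hasFDerivAt_id x).inner ℝ (hasFDerivAt_id x)
    refine this.congr_fderiv ?_
    symm
    apply ContinuousLinearMap.ext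
    intro v
    simp only [ContinuousLinearMap.smul_apply, innerSL_apply_apply, ContinuousLinearMap.comp_apply,
      fderivInnerCLM_apply, ContinuousLinearMap.prod_apply, ContinuousLinearMap.coe_id', id_eq,
      smul_eq_mul]
    rw [real_inner_comm v x]
    ring
  have hpos : (0:ℝ) < ⟪x, x⟫ := by
    rw [real_inner_self_eq_norm_mul_norm]
    have := norm_pos_iff.mpr hx
    positivity
  have h2 := (Real.hasDerivAt_sqrt hpos.ne').comp_hasFDerivAt_of_eq x h1 rfl
  have hfun : (Real.sqrt ∘ fun y : E3 => ⟪y, y⟫) = fun y : E3 => ‖y‖ := by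
    funext y
    simp only [Function.comp_apply]
    rw [real_inner_self_eq_norm_mul_norm, Real.sqrt_mul_self (norm_nonneg y)]
  rw [hfun] at h2
  have hxnorm : Real.sqrt ⟪x, x⟫ = ‖x‖ := by
    rw [real_inner_self_eq_norm_mul_norm, Real.sqrt_mul_self (norm_nonneg x)]
  refine h2.congr_fderiv ?_
  symm
  apply ContinuousLinearMap.ext
  intro v
  have hn : ‖x‖ ≠ 0 := norm_ne_zero_iff.mpr hx
  simp only [ContinuousLinearMap.smul_apply, innerSL_apply_apply, smul_eq_mul, hxnorm]
  field_simp

/-- The radial building block `g(t - r/c) rᵐ`. -/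
def Rad (c : ℝ) (g : ℝ → ℝ) (m : ℝ) : ℝ × E3 → ℝ :=
  fun p => g (p.1 - ‖p.2‖ / c) * ‖p.2‖ ^ m

/-- The total derivative of `Rad c g m`. -/
def radD (c : ℝ) (g : ℝ → ℝ) (m : ℝ) (p : ℝ × E3) : ℝ × E3 →L[ℝ] ℝ :=
  (deriv g (p.1 - ‖p.2‖ / c) * ‖p.2‖ ^ m) • ContinuousLinearMap.fst ℝ ℝ E3
  + (-(1/c) * deriv g (p.1 - ‖p.2‖ / c) * ‖p.2‖ ^ (m - 1)
      + m * g (p.1 - ‖p.2‖ / c) * ‖p.2‖ ^ (m - 2)) •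
    ((innerSL ℝ p.2).comp (ContinuousLinearMap.snd ℝ ℝ E3))

lemma radD_apply (c : ℝ) (g : ℝ → ℝ) (m : ℝ) (p : ℝ × E3) (v : ℝ × E3) :
    radD c g m p v = (deriv g (p.1 - ‖p.2‖ / c) * ‖p.2‖ ^ m) * v.1
      + (-(1/c) * deriv g (p.1 - ‖p.2‖ / c) * ‖p.2‖ ^ (m - 1)
          + m * g (p.1 - ‖p.2‖ / c) * ‖p.2‖ ^ (m - 2)) * ⟪p.2, v.2⟫ := by
  simp [radD]

lemma rad_hasFDerivAt {c : ℝ} (hc : c ≠ 0) {g : ℝ → ℝ} (hg : Differentiable ℝ g) (m : ℝ)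
    {p : ℝ × E3} (hp : p.2 ≠ 0) :
    HasFDerivAt (Rad c g m) (radD c g m p) p := by
  have hr : (0:ℝ) < ‖p.2‖ := norm_pos_iff.mpr hp
  have h1 : HasFDerivAt (fun q : ℝ × E3 => ‖q.2‖)
      ((‖p.2‖⁻¹ • innerSL ℝ p.2).comp (ContinuousLinearMap.snd ℝ ℝ E3)) p :=
    (hasFDerivAt_norm' hp).comp p hasFDerivAt_snd
  have h2 : HasFDerivAt (fun q : ℝ × E3 => ‖q.2‖ / c)
      (c⁻¹ • ((‖p.2‖⁻¹ • innerSL ℝ p.2).comp (ContinuousLinearMap.snd ℝ ℝ E3))) p := by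
    simpa [div_eq_inv_mul, smul_eq_mul] using h1.fun_const_smul c⁻¹
  have hw : HasFDerivAt (fun q : ℝ × E3 => q.1 - ‖q.2‖ / c)
      (ContinuousLinearMap.fst ℝ ℝ E3
        - c⁻¹ • ((‖p.2‖⁻¹ • innerSL ℝ p.2).comp (ContinuousLinearMap.snd ℝ ℝ E3))) p :=
    hasFDerivAt_fst.sub h2
  have hgw := ((hg _).hasDerivAt).comp_hasFDerivAt_of_eq p hw rfl
  have hrm := (Real.hasDerivAt_rpow_const (p := m) (Or.inl hr.ne')).comp_hasFDerivAt_of_eq p h1 rfl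
  have hmul := hgw.mul hrm
  have e1 : ‖p.2‖ ^ (m - 1) = ‖p.2‖ ^ m * ‖p.2‖⁻¹ := by
    rw [Real.rpow_sub hr, Real.rpow_one, div_eq_mul_inv]
  have e2 : ‖p.2‖ ^ (m - 2) = ‖p.2‖ ^ m * ‖p.2‖⁻¹ * ‖p.2‖⁻¹ := by
    rw [show m - 2 = m - 1 - 1 by ring, Real.rpow_sub hr, Real.rpow_one, div_eq_mul_inv, e1]
  refine hmul.congr_fderiv ?_
  symm
  apply ContinuousLinearMap.ext
  intro v
  simp only [radD_apply, Function.comp, ContinuousLinearMap.add_apply,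
    ContinuousLinearMap.smul_apply, ContinuousLinearMap.coe_sub', Pi.sub_apply,
    ContinuousLinearMap.coe_fst', ContinuousLinearMap.coe_comp',
    ContinuousLinearMap.coe_snd', innerSL_apply_apply, smul_eq_mul, Function.comp_apply]
  rw [e1, e2]
  field_simp
  ring

lemma Dv_t_rad {c : ℝ} (hc : c ≠ 0) {g : ℝ → ℝ} (hg : Differentiable ℝ g) (m : ℝ)
    {p : ℝ × E3} (hp : p.2 ≠ 0) :
    Dv ((1:ℝ), (0:E3)) (Rad c g m) p = Rad c (deriv g) m p := by
  show fderiv ℝ (Rad c g m) p ((1:ℝ), (0:E3)) = _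
  rw [(rad_hasFDerivAt hc hg m hp).fderiv, radD_apply]
  simp [Rad]

lemma Dv_e_rad {c : ℝ} (hc : c ≠ 0) {g : ℝ → ℝ} (hg : Differentiable ℝ g) (m : ℝ)
    {p : ℝ × E3} (hp : p.2 ≠ 0) (e : E3) :
    Dv ((0:ℝ), e) (Rad c g m) p
      = ⟪p.2, e⟫ * (-(1/c) * Rad c (deriv g) (m - 1) p + m * Rad c g (m - 2) p) := by
  show fderiv ℝ (Rad c g m) p ((0:ℝ), e) = _
  rw [(rad_hasFDerivAt hc hg m hp).fderiv, radD_apply]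
  simp [Rad]
  ring

section SecondDerivs

variable {c : ℝ} {F : ℝ → ℝ}

lemma DtDt_G (hc : c ≠ 0) (hF : Differentiable ℝ F) (hF1 : Differentiable ℝ (deriv F))
    {p : ℝ × E3} (hp : p.2 ≠ 0) :
    Dv ((1:ℝ), (0:E3)) (Dv ((1:ℝ), (0:E3)) (Rad c F (-1))) p
      = Rad c (deriv (deriv F)) (-1) p := by
  have heq : Dv ((1:ℝ), (0:E3)) (Rad c F (-1)) =ᶠ[nhds p] Rad c (deriv F) (-1) :=
    Filter.eventuallyEq_of_mem (isOpen_Omg.mem_nhds hp)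
      (fun q hq => Dv_t_rad hc hF (-1) hq)
  show fderiv ℝ (Dv ((1:ℝ), (0:E3)) (Rad c F (-1))) p ((1:ℝ), (0:E3)) = _
  rw [heq.fderiv_eq]
  exact Dv_t_rad hc hF1 (-1) hp

lemma DeDe_G (hc : c ≠ 0) (hF : Differentiable ℝ F) (hF1 : Differentiable ℝ (deriv F))
    {p : ℝ × E3} (hp : p.2 ≠ 0) (e : E3) :
    Dv ((0:ℝ), e) (Dv ((0:ℝ), e) (Rad c F (-1))) p
      = ⟪e, e⟫ * (-(1/c) * Rad c (deriv F) (-2) p + (-1) * Rad c F (-3) p)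
        + ⟪p.2, e⟫ ^ 2 * ((1/c^2) * Rad c (deriv (deriv F)) (-3) p
            + (3/c) * Rad c (deriv F) (-4) p + 3 * Rad c F (-5) p) := by
  set S : ℝ × E3 → ℝ :=
    fun q => -(1/c) * Rad c (deriv F) (-2) q + (-1) * Rad c F (-3) q with hS
  have heq : Dv ((0:ℝ), e) (Rad c F (-1)) =ᶠ[nhds p] fun q => ⟪q.2, e⟫ * S q := by
    refine Filter.eventuallyEq_of_mem (isOpen_Omg.mem_nhds hp) (fun q hq => ?_)
    have := Dv_e_rad hc hF (-1) (show q.2 ≠ 0 from hq) e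
    rw [this]
    norm_num [hS]
  have hSd : HasFDerivAt S ((-(1/c)) • radD c (deriv F) (-2) p
      + (-1 : ℝ) • radD c F (-3) p) p :=
    ((rad_hasFDerivAt hc hF1 (-2) hp).const_mul (-(1/c))).add
      ((rad_hasFDerivAt hc hF (-3) hp).const_mul (-1))
  have hInner : HasFDerivAt (fun q : ℝ × E3 => ⟪q.2, e⟫)
      ((innerSL ℝ e).comp (ContinuousLinearMap.snd ℝ ℝ E3)) p := by
    have h0 := ((innerSL ℝ e).comp (ContinuousLinearMap.snd ℝ ℝ E3)).hasFDerivAt (x := p)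
    have heq2 : (fun q : ℝ × E3 => ⟪q.2, e⟫) = fun q : ℝ × E3 => ⟪e, q.2⟫ := by
      funext q; rw [real_inner_comm]
    rw [heq2]
    exact h0
  have hprod := hInner.fun_mul hSd
  show fderiv ℝ (Dv ((0:ℝ), e) (Rad c F (-1))) p ((0:ℝ), e) = _
  rw [heq.fderiv_eq, hprod.fderiv]
  have hr : (0:ℝ) < ‖p.2‖ := norm_pos_iff.mpr hp
  simp only [ContinuousLinearMap.add_apply, ContinuousLinearMap.smul_apply,
    ContinuousLinearMap.coe_comp', Function.comp_apply, ContinuousLinearMap.coe_snd',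
    innerSL_apply_apply, smul_eq_mul, radD_apply]
  rw [real_inner_comm e p.2]
  norm_num [Rad, hS]
  field_simp
  ring

lemma eV_self (i : Fin 3) : eV i i = 1 := by simp [eV]

lemma inner_eV_self (i : Fin 3) : ⟪eV i, eV i⟫ = (1:ℝ) := by
  simp [eV, EuclideanSpace.inner_single_left, EuclideanSpace.single_apply]

lemma inner_eV (x : E3) (i : Fin 3) : ⟪x, eV i⟫ = x i := by
  simp [eV, EuclideanSpace.inner_single_right]

lemma sum_sq (x : E3) : ∑ i : Fin 3, (x i) ^ 2 = ‖x‖ ^ 2 := by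
  rw [EuclideanSpace.norm_eq, Real.sq_sqrt (by positivity)]
  exact Finset.sum_congr rfl fun i _ => by rw [Real.norm_eq_abs, sq_abs]

lemma rpow_neg_nat (r : ℝ) (hr : 0 ≤ r) (k : ℕ) : r ^ (-(k:ℝ)) = (r ^ k)⁻¹ := by
  rw [Real.rpow_neg hr, Real.rpow_natCast]

/-- The retarded spherical wave satisfies the wave equation away from the origin. -/
lemma box_G (hc : c ≠ 0) (hF : Differentiable ℝ F) (hF1 : Differentiable ℝ (deriv F)) :
    ∀ p ∈ Omg, box c (Rad c F (-1)) p = 0 := by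
  intro p hp
  have hp2 : p.2 ≠ 0 := hp
  have hr : (0:ℝ) < ‖p.2‖ := norm_pos_iff.mpr hp2
  rw [box]
  rw [Finset.sum_congr rfl (fun i _ => DeDe_G hc hF hF1 hp2 (eV i)),
    DtDt_G hc hF hF1 hp2]
  simp only [inner_eV_self, inner_eV, eV_self]
  rw [Finset.sum_add_distrib]
  have h3 : (∑ _i : Fin 3, ((1:ℝ) * (-(1/c) * Rad c (deriv F) (-2) p + (-1) * Rad c F (-3) p)))
      = 3 * (-(1/c) * Rad c (deriv F) (-2) p + (-1) * Rad c F (-3) p) := by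
    rw [Finset.sum_const]
    simp; ring
  rw [h3, ← Finset.sum_mul, sum_sq]
  simp only [Rad]
  rw [show (-1:ℝ) = -((1:ℕ):ℝ) by norm_num, show (-2:ℝ) = -((2:ℕ):ℝ) by norm_num,
    show (-3:ℝ) = -((3:ℕ):ℝ) by norm_num, show (-4:ℝ) = -((4:ℕ):ℝ) by norm_num,
    show (-5:ℝ) = -((5:ℕ):ℝ) by norm_num]
  rw [rpow_neg_nat _ (norm_nonneg _), rpow_neg_nat _ (norm_nonneg _),
    rpow_neg_nat _ (norm_nonneg _), rpow_neg_nat _ (norm_nonneg _),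
    rpow_neg_nat _ (norm_nonneg _)]
  field_simp
  ring

lemma smooth_G (hc : c ≠ 0) (hF : ContDiff ℝ (⊤ : ℕ∞) F) : WSmooth (Rad c F (-1)) := by
  intro m p hp
  apply ContDiffAt.contDiffWithinAt
  have hp2 : p.2 ≠ 0 := hp
  have hrne : ‖p.2‖ ≠ 0 := norm_ne_zero_iff.mpr hp2
  have h1 : ContDiffAt ℝ m (fun q : ℝ × E3 => ‖q.2‖) p :=
    (contDiffAt_norm ℝ hp2).comp p contDiffAt_snd
  have h2 : ContDiffAt ℝ m (fun q : ℝ × E3 => F (q.1 - ‖q.2‖ / c)) p :=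
    (hF.contDiffAt.of_le (by exact_mod_cast le_top)).comp p (contDiffAt_fst.sub (h1.div_const c))
  have hfun : Rad c F (-1) = fun q : ℝ × E3 => F (q.1 - ‖q.2‖ / c) * ‖q.2‖⁻¹ := by
    funext q
    rw [Rad, show (-1:ℝ) = -((1:ℕ):ℝ) by norm_num,
      rpow_neg_nat _ (norm_nonneg _), pow_one]
  rw [hfun]
  exact h2.mul (h1.inv hrne)

end SecondDerivs

/-- Iterated directional spatial derivatives. -/
def multiDv : List (Fin 3) → (ℝ × E3 → ℝ) → ℝ × E3 → ℝ
  | [], H => H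
  | i :: L, H => Dv ((0:ℝ), eV i) (multiDv L H)

lemma master {c : ℝ} (hc : c ≠ 0) {F : ℝ → ℝ} (hF : ContDiff ℝ (⊤ : ℕ∞) F) (L : List (Fin 3)) :
    WSmooth (multiDv L (Rad c F (-1))) ∧
    (∀ p ∈ Omg, box c (multiDv L (Rad c F (-1))) p = 0) ∧
    (∀ t (x : E3), x ≠ 0 →
      multiDeriv L (fun t x => F (t - ‖x‖ / c) / ‖x‖) t x
        = multiDv L (Rad c F (-1)) (t, x)) := by
  have hFi : ContDiff ℝ ((⊤ : ℕ∞) : WithTop ℕ∞) F := hF.of_le (by simp)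
  have hFd : Differentiable ℝ F := (contDiff_infty_iff_deriv.mp hFi).1
  have hF1d : Differentiable ℝ (deriv F) :=
    (contDiff_infty_iff_deriv.mp (contDiff_infty_iff_deriv.mp hFi).2).1
  induction L with
  | nil =>
    refine ⟨smooth_G hc hF, box_G hc hFd hF1d, ?_⟩
    intro t x hx
    show F (t - ‖x‖ / c) / ‖x‖ = Rad c F (-1) (t, x)
    rw [Rad]
    rw [show (-1:ℝ) = -((1:ℕ):ℝ) by norm_num, rpow_neg_nat _ (norm_nonneg _), pow_one,
      div_eq_mul_inv]
  | cons i L ih =>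
    obtain ⟨hs, hb, he⟩ := ih
    refine ⟨smooth_Dv hs _, box_Dv hs hb _, ?_⟩
    intro t x hx
    show spatialDeriv i (multiDeriv L (fun t x => F (t - ‖x‖ / c) / ‖x‖)) t x
      = Dv ((0:ℝ), eV i) (multiDv L (Rad c F (-1))) (t, x)
    exact spatialDeriv_eq hs he i t x hx

end MultipolarWaveAux

open MultipolarWaveAux in
/-- The multipolar waves `u = ∂_{i₁}⋯∂_{i_l}(F(t - |x|/c)/|x|)` satisfy the homogeneous
wave equation `Δu - (1/c²) ∂²u/∂t² = 0` away from the spatial origin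
(the building blocks of Theorem 1 of the paper, Eqs. (4)-(6)). -/
theorem multipolar_retarded_wave_solves_wave_equation
    (c : ℝ) (hc : 0 < c) (F : ℝ → ℝ) (hF : ContDiff ℝ (⊤ : ℕ∞) F)
    (L : List (Fin 3)) (u : ℝ → EuclideanSpace ℝ (Fin 3) → ℝ)
    (hu : u = multiDeriv L (fun t x => F (t - ‖x‖ / c) / ‖x‖)) :
    ∀ (t : ℝ) (x : EuclideanSpace ℝ (Fin 3)), x ≠ 0 →
      spatialLaplacian u t x - (1 / c ^ 2) * timeDeriv2 u t x = 0 := by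
  obtain ⟨hs, hb, he⟩ := master hc.ne' hF L
  intro t x hx
  set H := multiDv L (Rad c F (-1)) with hH
  have hcur : ∀ t (x : E3), x ≠ 0 → u t x = H (t, x) := by
    intro t x hx
    rw [hu]
    exact he t x hx
  have hlap : ∀ i : Fin 3, spatialDeriv i (spatialDeriv i u) t x
      = Dv ((0:ℝ), eV i) (Dv ((0:ℝ), eV i) H) (t, x) := by
    intro i
    exact spatialDeriv_eq (smooth_Dv hs _) (spatialDeriv_eq hs hcur i) i t x hx
  have htime : timeDeriv2 u t x = Dv ((1:ℝ), (0:E3)) (Dv ((1:ℝ), (0:E3)) H) (t, x) :=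
    timeDeriv2_eq hs hcur t x hx
  have hbox := hb (t, x) hx
  rw [box] at hbox
  show (∑ i : Fin 3, spatialDeriv i (spatialDeriv i u) t x)
      - (1 / c ^ 2) * timeDeriv2 u t x = 0
  rw [Finset.sum_congr rfl (fun i _ => hlap i), htime]
  exact hbox
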